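/- Let X be a prefix code over A such that every element of X is a palindrome. Then ψ_X is conservative if and only if for every w ∈ X* and every x ∈ X, the longest palindromic suffix of ψ_X(w)x belongs to X*. -/

import Mathlib

open List

/-- Right palindromic closure: `w⁺ = u Q u~` where `Q` is the longest palindromic
suffix of `w = uQ`; equivalently the shortest palindrome having `w` as a prefix. -/
noncomputable def palClosure {A : Type*} (w : List A) : List A :=
  letI : DecidablePred fun k => (w.drop k).reverse = w.drop k :=
    fun _ => Classical.propDecidable _
  w ++ (w.take (Nat.find (⟨w.length, by simp⟩ :
    ∃ k, (w.drop k).reverse = w.drop k))).reverse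

/-- The palindromization map `ψ_X` relative to a code `X`, evaluated on the
(unique) `X`-factorization `l = [x₁, …, xₙ]` of a word of `X*`. -/
noncomputable def psiList {A : Type*} (l : List (List A)) : List A :=
  l.foldl (fun p x => palClosure (p ++ x)) []

/-- The (usual) palindromization map `ψ` on words, letter by letter. -/
noncomputable def psiWord {A : Type*} (w : List A) : List A :=
  w.foldl (fun p a => palClosure (p ++ [a])) []

/-- `X` is a code: nonempty words with unique factorization over `X`. -/
def IsCode {A : Type*} (X : Set (List A)) : Prop :=
  (∀ x ∈ X, x ≠ []) ∧
  ∀ l l' : List (List A), (∀ w ∈ l, w ∈ X) → (∀ w ∈ l', w ∈ X) →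
    l.flatten = l'.flatten → l = l'

/-- `X` is a prefix code: nonempty words, none a proper prefix of another. -/
def IsPrefixCode {A : Type*} (X : Set (List A)) : Prop :=
  (∀ x ∈ X, x ≠ []) ∧ ∀ x ∈ X, ∀ y ∈ X, x <+: y → x = y

/-- `X` is a maximal prefix code over `A`. -/
def IsMaximalPrefixCode {A : Type*} (X : Set (List A)) : Prop :=
  IsPrefixCode X ∧ ∀ Y : Set (List A), IsPrefixCode Y → X ⊆ Y → X = Y

/-- `w ∈ X*`. -/
def InStar {A : Type*} (X : Set (List A)) (w : List A) : Prop :=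
  ∃ l : List (List A), (∀ u ∈ l, u ∈ X) ∧ l.flatten = w

/-- The finite word `w` is a prefix of the infinite word `s`. -/
def PrefixOfInf {A : Type*} (w : List A) (s : ℕ → A) : Prop :=
  ∀ i : ℕ, ∀ h : i < w.length, w.get ⟨i, h⟩ = s i

/-- The finite word `w` is a factor of the infinite word `s`. -/
def FactorOfInf {A : Type*} (w : List A) (s : ℕ → A) : Prop :=
  ∃ i : ℕ, w = List.ofFn fun k : Fin w.length => s (i + k.1)

/-- `X` has finite deciphering delay. -/
def FiniteDecipheringDelay {A : Type*} (X : Set (List A)) : Prop :=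
  ∃ k : ℕ, ∀ x ∈ X, ∀ x' ∈ X,
    (∃ (l l' : List (List A)) (r : List A),
      (∀ w ∈ l, w ∈ X) ∧ l.length = k ∧ (∀ w ∈ l', w ∈ X) ∧
      x ++ l.flatten ++ r = x' ++ l'.flatten) → x = x'

/-- The sequence `y = y₁y₂⋯ ∈ X^ω` is alternating. -/
def Alternating {A : Type*} (y : ℕ → List A) : Prop :=
  ∃ a b : A, a ≠ b ∧ ∃ (lam : List A) (idx : ℕ → ℕ), StrictMono idx ∧
    ∀ k : ℕ, (lam ++ [a]) <+: y (idx (2 * k)) ∧ (lam ++ [b]) <+: y (idx (2 * k + 1))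

/-- The infinite word `s` is ultimately periodic. -/
def UltimatelyPeriodic {A : Type*} (s : ℕ → A) : Prop :=
  ∃ p : ℕ, 0 < p ∧ ∃ N : ℕ, ∀ n ≥ N, s (n + p) = s n

/-- The infinite word `s` is uniformly recurrent: every factor occurs in every
sufficiently long factor of `s`. -/
def UniformlyRecurrent {A : Type*} (s : ℕ → A) : Prop :=
  ∀ w : List A, FactorOfInf w s →
    ∃ N : ℕ, ∀ i : ℕ, w <:+: List.ofFn fun k : Fin N => s (i + k.1)

/-- Factor complexity of the infinite word `s`. -/
noncomputable def complexity {A : Type*} (s : ℕ → A) (n : ℕ) : ℕ :=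
  {u : List A | u.length = n ∧ FactorOfInf u s}.ncard

/-- A word `w` is primitive if it is not a proper power. -/
def Primitive {A : Type*} (w : List A) : Prop :=
  ∀ (v : List A) (n : ℕ), 1 < n → w ≠ (List.replicate n v).flatten

/-! For a word `w = uQ` with `Q` its longest palindromic suffix, `w⁺ = w ũ`. Since `X` is a prefix code
of palindromes, `X*` is closed under reversal and under left and right cancellation, so
`w ũ ∈ X*` iff `u ∈ X*` iff `Q ∈ X*` whenever `w ∈ X*`. Applied to `w = ψ_X(l) x` this gives the
forward direction at once and the converse by induction on `l`. -/

section

variable {A : Type*} {X : Set (List A)}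

def IsLongestPalSuffix (Q w : List A) : Prop :=
  Q.reverse = Q ∧ Q <:+ w ∧ ∀ Q' : List A, Q'.reverse = Q' → Q' <:+ w → Q'.length ≤ Q.length

theorem IsLongestPalSuffix.unique {Q Q' w : List A} (hQ : IsLongestPalSuffix Q w)
    (hQ' : IsLongestPalSuffix Q' w) : Q = Q' := by
  have hlen : Q.length = Q'.length :=
    le_antisymm (hQ'.2.2 Q hQ.1 hQ.2.1) (hQ.2.2 Q' hQ'.1 hQ'.2.1)
  exact (suffix_of_suffix_length_le hQ.2.1 hQ'.2.1 hlen.le).eq_of_length hlen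

theorem exists_palClosure_eq (w : List A) :
    ∃ u Q, w = u ++ Q ∧ IsLongestPalSuffix Q w ∧ palClosure w = w ++ u.reverse := by
  classical
  have hex : ∃ k, (w.drop k).reverse = w.drop k := ⟨w.length, by simp⟩
  refine ⟨w.take (Nat.find hex), w.drop (Nat.find hex), (take_append_drop _ _).symm,
    ⟨Nat.find_spec hex, drop_suffix _ _, fun Q' hQ'pal hQ'suf => ?_⟩, ?_⟩
  · have hQ' : Q' = w.drop (w.length - Q'.length) := suffix_iff_eq_drop.1 hQ'suf
    have hk : Nat.find hex ≤ w.length - Q'.length := Nat.find_min' hex (hQ' ▸ hQ'pal)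
    have := hQ'suf.length_le
    rw [length_drop]
    omega
  · unfold palClosure
    congr

namespace InStar

theorem of_mem {x : List A} (hx : x ∈ X) : InStar X x :=
  ⟨[x], by simpa using hx, by simp⟩

theorem append {u v : List A} (hu : InStar X u) (hv : InStar X v) : InStar X (u ++ v) := by
  obtain ⟨l, hl, rfl⟩ := hu
  obtain ⟨m, hm, rfl⟩ := hv
  exact ⟨l ++ m, fun w hw => (mem_append.1 hw).elim (hl w) (hm w), flatten_append⟩

theorem reverse (hpal : ∀ x ∈ X, x.reverse = x) {w : List A} (hw : InStar X w) :
    InStar X w.reverse := by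
  obtain ⟨l, hl, rfl⟩ := hw
  refine ⟨(l.map List.reverse).reverse, ?_, reverse_flatten.symm⟩
  simp only [mem_reverse, mem_map]
  rintro _ ⟨v, hv, rfl⟩
  rw [hpal v (hl v hv)]
  exact hl v hv

end InStar

namespace IsPrefixCode

theorem inStar_of_flatten_append_eq (hX : IsPrefixCode X) {v : List A} :
    ∀ {l m : List (List A)}, (∀ u ∈ l, u ∈ X) → (∀ u ∈ m, u ∈ X) →
      l.flatten ++ v = m.flatten → InStar X v
  | [], m, _, hm, h => ⟨m, hm, by simpa using h.symm⟩
  | a :: l, [], hl, _, h => by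
    simp only [flatten_cons, flatten_nil, append_assoc, append_eq_nil_iff] at h
    exact absurd h.1 (hX.1 a (hl a mem_cons_self))
  | a :: l, b :: m, hl, hm, h => by
    simp only [flatten_cons, append_assoc] at h
    have haX := hl a mem_cons_self
    have hbX := hm b mem_cons_self
    obtain rfl : a = b :=
      (prefix_or_prefix_of_prefix ⟨_, h⟩ (prefix_append b m.flatten)).elim
        (hX.2 a haX b hbX) fun hba => (hX.2 b hbX a haX hba).symm
    exact hX.inStar_of_flatten_append_eq (fun u hu => hl u (mem_cons_of_mem a hu))
      (fun u hu => hm u (mem_cons_of_mem a hu)) (append_cancel_left h)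

theorem inStar_right_of_append (hX : IsPrefixCode X) {u v : List A} (hu : InStar X u)
    (huv : InStar X (u ++ v)) : InStar X v := by
  obtain ⟨l, hl, rfl⟩ := hu
  obtain ⟨m, hm, hm'⟩ := huv
  exact hX.inStar_of_flatten_append_eq hl hm hm'.symm

theorem inStar_left_of_append (hX : IsPrefixCode X) (hpal : ∀ x ∈ X, x.reverse = x)
    {u v : List A} (hv : InStar X v) (huv : InStar X (u ++ v)) : InStar X u := by
  have h := hX.inStar_right_of_append (hv.reverse hpal)
    (by simpa only [reverse_append] using huv.reverse hpal)
  simpa only [reverse_reverse] using h.reverse hpal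

theorem inStar_palClosure_iff (hX : IsPrefixCode X) (hpal : ∀ x ∈ X, x.reverse = x)
    {w : List A} (hw : InStar X w) :
    InStar X (palClosure w) ↔ ∃ Q, IsLongestPalSuffix Q w ∧ InStar X Q := by
  obtain ⟨u, Q, rfl, hQ, hclosure⟩ := exists_palClosure_eq w
  rw [hclosure]
  constructor
  · intro h
    have hu : InStar X u := by
      simpa only [reverse_reverse] using (hX.inStar_right_of_append hw h).reverse hpal
    exact ⟨Q, hQ, hX.inStar_right_of_append hu hw⟩
  · rintro ⟨Q', hQ', hQ'X⟩
    rw [← hQ.unique hQ'] at hQ'X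
    exact hw.append ((hX.inStar_left_of_append hpal hQ'X hw).reverse hpal)

end IsPrefixCode

theorem psiList_append_singleton (l : List (List A)) (x : List A) :
    psiList (l ++ [x]) = palClosure (psiList l ++ x) := by
  simp [psiList, foldl_append]

end

theorem stmt17_general {A : Type*} (X : Set (List A)) (hX : IsPrefixCode X)
    (hpal : ∀ x ∈ X, x.reverse = x) :
    (∀ l : List (List A), (∀ w ∈ l, w ∈ X) → InStar X (psiList l)) ↔
    (∀ l : List (List A), (∀ w ∈ l, w ∈ X) → ∀ x ∈ X,
      ∃ Q : List A, Q.reverse = Q ∧ Q <:+ psiList l ++ x ∧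
        (∀ Q' : List A, Q'.reverse = Q' → Q' <:+ psiList l ++ x →
          Q'.length ≤ Q.length) ∧
        InStar X Q) := by
  constructor
  · intro hcons l hl x hx
    have hsnoc : InStar X (psiList (l ++ [x])) :=
      hcons _ fun u hu => (mem_append.1 hu).elim (hl u) fun h => mem_singleton.1 h ▸ hx
    rw [psiList_append_singleton,
      hX.inStar_palClosure_iff hpal ((hcons l hl).append (.of_mem hx))] at hsnoc
    obtain ⟨Q, ⟨hpalQ, hsuf, hmax⟩, hQX⟩ := hsnoc
    exact ⟨Q, hpalQ, hsuf, hmax, hQX⟩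
  · intro hlps l
    induction l using reverseRecOn with
    | nil => exact fun _ => ⟨[], by simp, rfl⟩
    | append_singleton l x ih =>
      intro hl
      have hl' : ∀ u ∈ l, u ∈ X := fun u hu => hl u (mem_append_left _ hu)
      have hx : x ∈ X := hl x (mem_append_right _ (mem_singleton_self x))
      rw [psiList_append_singleton, hX.inStar_palClosure_iff hpal ((ih hl').append (.of_mem hx))]
      obtain ⟨Q, hpalQ, hsuf, hmax, hQX⟩ := hlps l hl' x hx
      exact ⟨Q, ⟨hpalQ, hsuf, hmax⟩, hQX⟩

/-- For a prefix code `X ⊆ PAL`: `ψ_X` is conservative iff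
for all `w ∈ X*` and `x ∈ X` the longest palindromic suffix of `ψ_X(w)x`
belongs to `X*`. -/
theorem stmt17 {A : Type*} [Fintype A] (X : Set (List A)) (hX : IsPrefixCode X)
    (hpal : ∀ x ∈ X, x.reverse = x) :
    (∀ l : List (List A), (∀ w ∈ l, w ∈ X) → InStar X (psiList l)) ↔
    (∀ l : List (List A), (∀ w ∈ l, w ∈ X) → ∀ x ∈ X,
      ∃ Q : List A, Q.reverse = Q ∧ Q <:+ psiList l ++ x ∧
        (∀ Q' : List A, Q'.reverse = Q' → Q' <:+ psiList l ++ x →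
          Q'.length ≤ Q.length) ∧
        InStar X Q) :=
  stmt17_general X hX hpal
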